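/- Let G be a Δ-regular finite simple graph of order n ≥ 1. Then the unique real zero of the alliance polynomial A(G;x) is x = 0, and its multiplicity as a root is n − Δ. -/

import Mathlib

/-!
In a `Δ`-regular graph every exact defensive `k`-alliance has `k = δ_S(v) - (Δ - δ_S(v))` for
some `v`, so `k + Δ` is even and nonnegative. Hence `A(G;x) = x^(n-Δ) Q(x)` where `Q` only
has even powers of `x` with nonnegative coefficients, and its constant term `A_{-Δ}(G)` is
positive because every singleton is a `(-Δ)`-alliance. Thus `Q` has no real zero.
-/

open Polynomial Finset

/-- Number of neighbors of `v` inside the set `S` (denoted δ_S(v)). -/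
def SimpleGraph.degIn {V : Type*} [Fintype V] [DecidableEq V]
    (G : SimpleGraph V) [DecidableRel G.Adj] (S : Finset V) (v : V) : ℕ :=
  (S.filter (fun u => G.Adj v u)).card

/-- Number of neighbors of `v` outside the set `S` (denoted δ_{S̄}(v)). -/
def SimpleGraph.degOut {V : Type*} [Fintype V] [DecidableEq V]
    (G : SimpleGraph V) [DecidableRel G.Adj] (S : Finset V) (v : V) : ℕ :=
  (Sᶜ.filter (fun u => G.Adj v u)).card

/-- `S` is an exact defensive `k`-alliance in `G`: the induced subgraph `⟨S⟩` is connected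
(in particular `S` is nonempty) and `k = k_S = min_{v ∈ S} (δ_S(v) - δ_{S̄}(v))`. -/
def SimpleGraph.IsExactAlliance {V : Type*} [Fintype V] [DecidableEq V]
    (G : SimpleGraph V) [DecidableRel G.Adj] (S : Finset V) (k : ℤ) : Prop :=
  (G.induce (S : Set V)).Connected ∧
    (∀ v ∈ S, k ≤ (G.degIn S v : ℤ) - (G.degOut S v : ℤ)) ∧
    (∃ v ∈ S, (G.degIn S v : ℤ) - (G.degOut S v : ℤ) = k)

/-- `A_k(G)`: the number of exact defensive `k`-alliances in `G`. -/
noncomputable def SimpleGraph.allianceCoeff {V : Type*} [Fintype V] [DecidableEq V]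
    (G : SimpleGraph V) [DecidableRel G.Adj] (k : ℤ) : ℕ :=
  Set.ncard {S : Finset V | G.IsExactAlliance S k}

/-- The alliance polynomial `A(G;x) = Σ_{k=-Δ}^{Δ} A_k(G) x^{n+k}`, where `n` is the order and
`Δ` the maximum degree of `G`, regarded as a real polynomial. -/
noncomputable def SimpleGraph.alliancePoly {V : Type*} [Fintype V] [DecidableEq V]
    (G : SimpleGraph V) [DecidableRel G.Adj] : Polynomial ℝ :=
  ∑ k ∈ Finset.Icc (-(G.maxDegree : ℤ)) (G.maxDegree : ℤ),
    (G.allianceCoeff k : ℝ) • X ^ (((Fintype.card V : ℤ) + k).toNat)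

namespace Polynomial

variable {R : Type*} [CommRing R]

lemma rootMultiplicity_zero_X_pow_mul {q : R[X]} (hq : q.eval 0 ≠ 0) (m : ℕ) :
    (X ^ m * q).rootMultiplicity 0 = m := by
  have hq0 : q ≠ 0 := by rintro rfl; exact hq eval_zero
  rw [mul_comm, ← sub_zero (X : R[X]), ← C_0, rootMultiplicity_mul_X_sub_C_pow hq0,
    rootMultiplicity_eq_zero hq, zero_add]

lemma eval_X_pow_mul_eq_zero_iff [NoZeroDivisors R] {q : R[X]} (hq : ∀ x, q.eval x ≠ 0)
    {m : ℕ} (hm : m ≠ 0) (x : R) : (X ^ m * q).eval x = 0 ↔ x = 0 := by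
  simp [hq x, hm]

end Polynomial

namespace SimpleGraph

variable {V : Type*} [Fintype V] [DecidableEq V] (G : SimpleGraph V) [DecidableRel G.Adj]

lemma degIn_add_degOut (S : Finset V) (v : V) :
    G.degIn S v + G.degOut S v = G.degree v := by
  rw [degIn, degOut, ← card_union_of_disjoint (disjoint_filter_filter disjoint_compl_right),
    ← filter_union, union_compl, degree, neighborFinset_eq_filter]

lemma isExactAlliance_singleton (v : V) : G.IsExactAlliance {v} (-(G.degree v : ℤ)) := by
  have hin : G.degIn {v} v = 0 := by simp [degIn, filter_singleton]
  have hsplit := G.degIn_add_degOut {v} v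
  have hval : (G.degIn {v} v : ℤ) - G.degOut {v} v = -(G.degree v : ℤ) := by omega
  refine ⟨?_, ?_, v, mem_singleton_self v, hval⟩
  · rw [coe_singleton, induce_singleton_eq_top]
    exact connected_top
  · intro u hu
    rw [mem_singleton.mp hu, hval]

variable {G}

lemma IsExactAlliance.even_add {Δ : ℕ} (hreg : G.IsRegularOfDegree Δ) {S : Finset V} {k : ℤ}
    (h : G.IsExactAlliance S k) : Even (k + Δ) := by
  obtain ⟨-, -, v, -, hk⟩ := h
  have hsplit := G.degIn_add_degOut S v
  rw [hreg v] at hsplit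
  exact ⟨G.degIn S v, by omega⟩

lemma even_add_of_allianceCoeff_ne_zero {Δ : ℕ} (hreg : G.IsRegularOfDegree Δ) {k : ℤ}
    (hk : G.allianceCoeff k ≠ 0) : Even (k + Δ) := by
  obtain ⟨S, hS⟩ := Set.nonempty_of_ncard_ne_zero hk
  exact hS.even_add hreg

lemma allianceCoeff_neg_pos [Nonempty V] {Δ : ℕ} (hreg : G.IsRegularOfDegree Δ) :
    0 < G.allianceCoeff (-(Δ : ℤ)) := by
  obtain ⟨v⟩ := ‹Nonempty V›
  rw [allianceCoeff, Set.ncard_pos (Set.toFinite _)]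
  exact ⟨{v}, hreg v ▸ G.isExactAlliance_singleton v⟩

variable (G)

noncomputable def allianceCofactor (Δ : ℕ) : ℝ[X] :=
  ∑ k ∈ Icc (-(Δ : ℤ)) Δ, (G.allianceCoeff k : ℝ) • X ^ (k + Δ).toNat

lemma alliancePoly_eq_X_pow_mul_allianceCofactor [Nonempty V] :
    G.alliancePoly = X ^ (Fintype.card V - G.maxDegree) * G.allianceCofactor G.maxDegree := by
  have hΔn := G.maxDegree_lt_card_verts
  rw [alliancePoly, allianceCofactor, mul_sum]
  refine sum_congr rfl fun k hk => ?_
  rw [mem_Icc] at hk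
  rw [mul_smul_comm, ← pow_add]
  congr 2
  omega

variable {G}

lemma allianceCofactor_eval_pos [Nonempty V] {Δ : ℕ} (hreg : G.IsRegularOfDegree Δ) (x : ℝ) :
    0 < (G.allianceCofactor Δ).eval x := by
  rw [allianceCofactor, eval_finsetSum]
  refine sum_pos' (fun k _ => ?_) ⟨-(Δ : ℤ), by simp, ?_⟩
  · rw [eval_smul, eval_pow, eval_X, smul_eq_mul]
    by_cases hk : G.allianceCoeff k = 0
    · simp [hk]
    · obtain ⟨d, hd⟩ := even_add_of_allianceCoeff_ne_zero hreg hk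
      have hev : Even (k + Δ).toNat := ⟨d.toNat, by omega⟩
      exact mul_nonneg (Nat.cast_nonneg _) (hev.pow_nonneg x)
  · simpa using allianceCoeff_neg_pos hreg

end SimpleGraph

/-- For a Δ-regular graph of order `n ≥ 1`, the unique real zero of `A(G;x)` is
`x = 0`, and its multiplicity as a root is `n - Δ`. -/
theorem alliancePoly_real_zero
    {V : Type*} [Fintype V] [DecidableEq V] [Nonempty V]
    (G : SimpleGraph V) [DecidableRel G.Adj] (Δ : ℕ)
    (hreg : G.IsRegularOfDegree Δ) :
    (∀ x : ℝ, G.alliancePoly.eval x = 0 ↔ x = 0) ∧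
    G.alliancePoly.rootMultiplicity 0 = Fintype.card V - Δ := by
  have hQ := G.allianceCofactor_eval_pos hreg
  have hΔn : Δ < Fintype.card V := hreg.maxDegree_eq ▸ G.maxDegree_lt_card_verts
  rw [G.alliancePoly_eq_X_pow_mul_allianceCofactor, hreg.maxDegree_eq]
  exact ⟨eval_X_pow_mul_eq_zero_iff (fun x => (hQ x).ne') (by omega),
    rootMultiplicity_zero_X_pow_mul (hQ 0).ne' _⟩
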